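/- arXiv:1012.0814 — 7 statements merged into one kernel-verified Lean document; each statement's English description precedes it below -/
import Mathlib

section
/- For each fixed positive integer n, the set of n-tuples (x_1, ..., x_n) of positive integers satisfying ∑_{i=1}^n 1/x_i = 1 is finite. -/
/-!
Induct on the length of the tuple, for an arbitrary rational target `q`. If `n + 1` unit
fractions sum to `q`, the largest of them is at least `q / (n + 1)`, so some denominator is at
most `(n + 1) / q`. Removing that entry leaves `n` unit fractions summing to `q - 1 / xᵢ`, and
there are only finitely many choices of position and value for the removed entry.
-/

def egyptianTuples (n : ℕ) (q : ℚ) : Set (Fin n → ℕ) :=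
  {x | (∀ i, 0 < x i) ∧ ∑ i, (1 : ℚ) / x i = q}

section

variable {n : ℕ} {q : ℚ} {x : Fin (n + 1) → ℕ}

lemma pos_of_mem_egyptianTuples (hx : x ∈ egyptianTuples (n + 1) q) : 0 < q := by
  rw [← hx.2]
  exact Finset.sum_pos (fun i _ => one_div_pos.2 (Nat.cast_pos.2 (hx.1 i))) Finset.univ_nonempty

lemma exists_le_of_mem_egyptianTuples (hx : x ∈ egyptianTuples (n + 1) q) :
    ∃ i, (x i : ℚ) ≤ (n + 1) / q := by
  have hq := pos_of_mem_egyptianTuples hx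
  have hsum : ∑ _i : Fin (n + 1), q / (n + 1) ≤ ∑ i, (1 : ℚ) / x i := by
    rw [hx.2, Finset.sum_const, Finset.card_univ, Fintype.card_fin, nsmul_eq_mul, Nat.cast_succ,
      mul_div_cancel₀ _ (by positivity)]
  obtain ⟨i, -, hi⟩ := Finset.exists_le_of_sum_le Finset.univ_nonempty hsum
  refine ⟨i, ?_⟩
  rwa [le_one_div (by positivity) (Nat.cast_pos.2 (hx.1 i)), one_div_div] at hi

lemma removeNth_mem_egyptianTuples (hx : x ∈ egyptianTuples (n + 1) q) (i : Fin (n + 1)) :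
    i.removeNth x ∈ egyptianTuples n (q - 1 / x i) := by
  refine ⟨fun j => hx.1 _, ?_⟩
  rw [← hx.2, Fin.sum_univ_succAbove _ i]
  simp only [Fin.removeNth_apply, add_sub_cancel_left]

lemma egyptianTuples_subset_iUnion_insertNth (q : ℚ) :
    egyptianTuples (n + 1) q ⊆
      ⋃ i : Fin (n + 1), ⋃ k ∈ Set.Iic ⌈(n + 1) / q⌉₊,
        i.insertNth k '' egyptianTuples n (q - 1 / k) := by
  intro x hx
  obtain ⟨i, hi⟩ := exists_le_of_mem_egyptianTuples hx
  simp only [Set.mem_iUnion]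
  exact ⟨i, x i, Nat.cast_le.1 (hi.trans (Nat.le_ceil _)),
    i.removeNth x, removeNth_mem_egyptianTuples hx i, Fin.insertNth_self_removeNth i x⟩

end

theorem egyptianTuples_finite (n : ℕ) (q : ℚ) : (egyptianTuples n q).Finite := by
  induction n generalizing q with
  | zero => exact Set.toFinite _
  | succ n ih =>
    refine Set.Finite.subset ?_ (egyptianTuples_subset_iUnion_insertNth q)
    exact Set.finite_iUnion fun i =>
      (Set.finite_Iic _).biUnion fun k _ => (ih _).image _

theorem landau_finiteness_general (n : ℕ) :
    {x : Fin n → ℕ | (∀ i, 0 < x i) ∧ ∑ i, (1 : ℚ) / (x i) = 1}.Finite :=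
  egyptianTuples_finite n 1

/-- Landau's finiteness theorem: for fixed `n`, there are finitely many `n`-tuples of
positive integers `x` with `∑ i, 1 / x i = 1`. -/
theorem landau_finiteness (n : ℕ) (hn : 1 ≤ n) :
    {x : Fin n → ℕ | (∀ i, 0 < x i) ∧ ∑ i, (1 : ℚ) / (x i) = 1}.Finite :=
  landau_finiteness_general n
end

section
/- Let ℓ and k be positive integers. Then there exist positive integers y_1 ≤ y_2 ≤ ... ≤ y_k with ∑_{i=1}^k 1/y_i = 1/ℓ and y_k = A_k, where A is the sequence defined by A_1 = ℓ and A_{i+1} = A_i(A_i + 1). (Concretely, one may take y_i = A_i + 1 for 1 ≤ i ≤ k−1 and y_k = A_k.) -/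
/-! Splitting the last term with `1 / a = 1 / (a + 1) + 1 / (a (a + 1))` turns the one-term
representation `1 / A₁` into `1 / (A₁ + 1) + 1 / A₂`, then into
`1 / (A₁ + 1) + 1 / (A₂ + 1) + 1 / A₃`, and so on; after `k - 1` splits the denominators are
`A₁ + 1 ≤ ⋯ ≤ A_{k-1} + 1 ≤ A_k`. -/

theorem one_div_eq_one_div_add_one_add_one_div_mul_add_one {K : Type*} [Field K] {a : K}
    (ha : a ≠ 0) (ha' : a + 1 ≠ 0) : 1 / a = 1 / (a + 1) + 1 / (a * (a + 1)) := by
  field_simp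

namespace Takenouchi

variable {A : ℕ → ℕ}

theorem pos (hA1 : 0 < A 1) (hA : ∀ i, 1 ≤ i → A (i + 1) = A i * (A i + 1))
    {i : ℕ} (hi : 1 ≤ i) : 0 < A i := by
  induction i, hi using Nat.le_induction with
  | base => exact hA1
  | succ n hn _ =>
    rw [hA n hn]
    positivity

theorem add_one_le_succ (hA1 : 0 < A 1) (hA : ∀ i, 1 ≤ i → A (i + 1) = A i * (A i + 1))
    {i : ℕ} (hi : 1 ≤ i) : A i + 1 ≤ A (i + 1) := by
  rw [hA i hi]
  exact Nat.le_mul_of_pos_left _ (pos hA1 hA hi)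

theorem monotoneOn (hA1 : 0 < A 1) (hA : ∀ i, 1 ≤ i → A (i + 1) = A i * (A i + 1)) :
    MonotoneOn A (Set.Ici 1) :=
  monotoneOn_nat_Ici_of_le_succ fun _ hn => (Nat.le_succ _).trans (add_one_le_succ hA1 hA hn)

theorem add_one_le_of_lt (hA1 : 0 < A 1) (hA : ∀ i, 1 ≤ i → A (i + 1) = A i * (A i + 1))
    {i j : ℕ} (hi : 1 ≤ i) (hij : i < j) : A i + 1 ≤ A j :=
  (add_one_le_succ hA1 hA hi).trans <|
    monotoneOn hA1 hA (Set.mem_Ici.2 (by omega)) (Set.mem_Ici.2 (by omega)) hij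

theorem sum_Ico_one_div_add_one_add_one_div (hA1 : 0 < A 1)
    (hA : ∀ i, 1 ≤ i → A (i + 1) = A i * (A i + 1)) {m : ℕ} (hm : 1 ≤ m) :
    ∑ i ∈ Finset.Ico 1 m, (1 : ℚ) / (A i + 1) + 1 / A m = 1 / A 1 := by
  induction m, hm using Nat.le_induction with
  | base => simp
  | succ n hn ih =>
    have hAn : (A n : ℚ) ≠ 0 := by exact_mod_cast (pos hA1 hA hn).ne'
    rw [Finset.sum_Ico_succ_top hn, add_assoc, hA n hn, Nat.cast_mul, Nat.cast_add_one,
      ← one_div_eq_one_div_add_one_add_one_div_mul_add_one hAn (by positivity), ih]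

end Takenouchi

/-- Attainment half of Takenouchi's result: there is a weakly increasing `k`-term Egyptian
fraction representation of `1 / ℓ` whose largest denominator is exactly `A k`,
where `A 1 = ℓ` and `A (i+1) = A i * (A i + 1)`. -/
theorem takenouchi_attained (ℓ k : ℕ) (hℓ : 1 ≤ ℓ) (hk : 1 ≤ k)
    (A : ℕ → ℕ) (hA1 : A 1 = ℓ)
    (hArec : ∀ i, 1 ≤ i → A (i + 1) = A i * (A i + 1)) :
    ∃ y : ℕ → ℕ,
      (∀ i ∈ Finset.Icc 1 k, 0 < y i) ∧
      (∀ i j, 1 ≤ i → i ≤ j → j ≤ k → y i ≤ y j) ∧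
      (∑ i ∈ Finset.Icc 1 k, (1 : ℚ) / (y i) = 1 / ℓ) ∧
      y k = A k := by
  have hA1pos : 0 < A 1 := hA1 ▸ hℓ
  refine ⟨fun i => if i = k then A k else A i + 1, ?_, ?_, ?_, if_pos rfl⟩
  · intro i _
    dsimp only
    split_ifs
    exacts [Takenouchi.pos hA1pos hArec hk, Nat.succ_pos _]
  · intro i j hi hij hjk
    dsimp only
    split_ifs with hik hjk'
    · exact le_rfl
    · omega
    · exact Takenouchi.add_one_le_of_lt hA1pos hArec hi (by omega)
    · exact Nat.succ_le_succ (Takenouchi.monotoneOn hA1pos hArec hi (hi.trans hij) hij)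
  · dsimp only
    rw [← Finset.Ico_add_one_right_eq_Icc, Finset.sum_Ico_succ_top hk, if_pos rfl,
      Finset.sum_congr rfl fun i hi => by rw [if_neg (Finset.mem_Ico.1 hi).2.ne],
      ← hA1]
    exact_mod_cast Takenouchi.sum_Ico_one_div_add_one_add_one_div hA1pos hArec hk
end

section
/- Let x_1 ≤ x_2 ≤ ... ≤ x_n be positive integers with ∑_{i=1}^n 1/x_i = 1. Then for every 1 ≤ k ≤ n one has k ≤ x_k ≤ u_k(n − k + 1), where u is the sequence defined by u_1 = 1 and u_{k+1} = u_k(u_k + 1). -/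
/-!
The lower bound is immediate: the first `k` terms are each at least `1 / x k`. For the upper
bound, the tail `∑_{i ≥ k} 1 / x i ≤ (n - k + 1) / x k` equals the gap `1 - ∑_{i < k} 1 / x i`,
and by Curtiss' theorem a sum of `k - 1` unit fractions below `1` leaves a gap of at least
`1 / u k`, the value attained by the greedy (Sylvester) choice `1/2 + 1/3 + 1/7 + ⋯`.

Curtiss' theorem goes by induction on the number of terms. By induction the prefix sums of the
reciprocals `1 / y i` are dominated by those of the greedy expansion, cut off so that both have the
same total `1 - t`; a majorization inequality for products then bounds `1 / ∏ y i` from below by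
`(1 / u) (1 / u - t)`, while integrality gives `t ≥ 1 / ∏ y i`. Together these force
`t ≥ 1 / (u (u + 1))`.
-/

open Finset

/-- `sylvesterProd n = u (n + 1)` is the product of the first `n` terms `2, 3, 7, 43, …` of
Sylvester's sequence. -/
def sylvesterProd : ℕ → ℕ
  | 0 => 1
  | n + 1 => sylvesterProd n * (sylvesterProd n + 1)

theorem sylvesterProd_pos (n : ℕ) : 0 < sylvesterProd n := by
  induction n with
  | zero => exact Nat.one_pos
  | succ _ ih => exact Nat.mul_pos ih (Nat.succ_pos _)

theorem sylvesterProd_le_succ (n : ℕ) : sylvesterProd n ≤ sylvesterProd (n + 1) :=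
  Nat.le_mul_of_pos_right _ (Nat.succ_pos _)

theorem sum_range_one_div_sylvesterProd_add_one (n : ℕ) :
    ∑ i ∈ range n, (1 : ℝ) / (sylvesterProd i + 1) = 1 - 1 / sylvesterProd n := by
  induction n with
  | zero => simp [sylvesterProd]
  | succ n ih =>
    have := (sylvesterProd_pos n).ne'
    rw [sum_range_succ, ih, sylvesterProd]
    push_cast
    field_simp
    ring

theorem prod_range_sylvesterProd_add_one (n : ℕ) :
    ∏ i ∈ range n, (sylvesterProd i + 1) = sylvesterProd n := by
  induction n with
  | zero => rfl
  | succ n ih => rw [prod_range_succ, ih, sylvesterProd]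

theorem sum_range_mul_nonpos_of_monotoneOn {m : ℕ} {w a : ℕ → ℝ}
    (hw : MonotoneOn w (Set.Iio m)) (ha : ∀ j ≤ m, 0 ≤ ∑ i ∈ range j, a i)
    (htot : ∑ i ∈ range m, a i = 0) :
    ∑ i ∈ range m, w i * a i ≤ 0 := by
  have hparts := sum_range_by_parts w a m
  simp only [smul_eq_mul, htot, mul_zero, zero_sub] at hparts
  rw [hparts, neg_nonpos]
  refine sum_nonneg fun i hi => mul_nonneg ?_ (ha _ ?_)
  · rw [mem_range] at hi
    exact sub_nonneg.2 (hw (show i < m by omega) (show i + 1 < m by omega) i.le_succ)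
  · rw [mem_range] at hi
    omega

theorem prod_range_le_prod_of_majorizes {m : ℕ} {d e : ℕ → ℝ} (hd : ∀ i < m, 0 < d i)
    (hd_anti : AntitoneOn d (Set.Iio m)) (he : ∀ i < m, 0 ≤ e i)
    (hprefix : ∀ j ≤ m, ∑ i ∈ range j, d i ≤ ∑ i ∈ range j, e i)
    (htot : ∑ i ∈ range m, e i = ∑ i ∈ range m, d i) :
    ∏ i ∈ range m, e i ≤ ∏ i ∈ range m, d i := by
  have hweights : MonotoneOn (fun i => 1 / d i) (Set.Iio m) := fun i hi j hj hij =>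
    one_div_le_one_div_of_le (hd j hj) (hd_anti hi hj hij)
  have hexponent : ∑ i ∈ range m, 1 / d i * (e i - d i) ≤ 0 :=
    sum_range_mul_nonpos_of_monotoneOn hweights
      (fun j hj => by simpa [sum_sub_distrib] using hprefix j hj)
      (by rw [sum_sub_distrib, htot, sub_self])
  -- tangent line of `log` at `d i`, in the form `e ≤ d * exp (e / d - 1)`
  calc ∏ i ∈ range m, e i
      ≤ ∏ i ∈ range m, d i * Real.exp (1 / d i * (e i - d i)) := by
        refine prod_le_prod (fun i hi => he i (mem_range.1 hi)) fun i hi => ?_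
        have hdi := hd i (mem_range.1 hi)
        calc e i = d i * (1 / d i * (e i - d i) + 1) := by field_simp; ring
          _ ≤ _ := mul_le_mul_of_nonneg_left (Real.add_one_le_exp _) hdi.le
    _ = (∏ i ∈ range m, d i) * Real.exp (∑ i ∈ range m, 1 / d i * (e i - d i)) := by
        rw [prod_mul_distrib, Real.exp_sum]
    _ ≤ ∏ i ∈ range m, d i :=
        mul_le_of_le_one_right (prod_nonneg fun i hi => (hd i (mem_range.1 hi)).le)
          (Real.exp_le_one_iff.2 hexponent)

theorem one_div_prod_le_one_sub_sum {ι : Type*} (s : Finset ι) (y : ι → ℕ)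
    (hy : ∀ i ∈ s, 0 < y i) (hlt : ∑ i ∈ s, (1 : ℝ) / y i < 1) :
    1 / (∏ i ∈ s, y i : ℕ) ≤ 1 - ∑ i ∈ s, (1 : ℝ) / y i := by
  set P := ∏ i ∈ s, y i
  have hP : (0 : ℝ) < P := by exact_mod_cast prod_pos hy
  have hscaled : (∑ i ∈ s, (1 : ℝ) / y i) * P = (∑ i ∈ s, P / y i : ℕ) := by
    rw [sum_mul, Nat.cast_sum]
    refine sum_congr rfl fun i hi => ?_
    have : (y i : ℝ) ≠ 0 := by exact_mod_cast (hy i hi).ne'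
    rw [Nat.cast_div (dvd_prod_of_mem y hi) this]
    ring
  have hlt_nat : ∑ i ∈ s, P / y i < P := by
    have := mul_lt_of_lt_one_left hP hlt
    rw [hscaled] at this
    exact_mod_cast this
  have hone : ((∑ i ∈ s, P / y i : ℕ) : ℝ) + 1 ≤ P := by exact_mod_cast hlt_nat
  rw [div_le_iff₀ hP, sub_mul, hscaled, one_mul]
  linarith

/-- The comparison sequence `e` is the greedy expansion `1/2, 1/3, 1/7, …` with its last term cut
down to give the same total `1 - t` as the `1 / y i`; `hgap` says that it majorizes them. -/
theorem one_div_sylvesterProd_mul_le_prod {p : ℕ} {y : ℕ → ℕ} (hy : ∀ i < p + 1, 0 < y i)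
    (hmono : MonotoneOn y (Set.Iio (p + 1)))
    (hgap : ∀ j ≤ p, 1 / (sylvesterProd j : ℝ) ≤ 1 - ∑ i ∈ range j, (1 : ℝ) / y i)
    {t : ℝ} (ht : ∑ i ∈ range (p + 1), (1 : ℝ) / y i = 1 - t)
    (htP : t ≤ 1 / sylvesterProd p) :
    1 / sylvesterProd p * (1 / sylvesterProd p - t) ≤ ∏ i ∈ range (p + 1), (1 : ℝ) / y i := by
  set e : ℕ → ℝ := fun i => if i < p then 1 / (sylvesterProd i + 1) else 1 / sylvesterProd p - t
  have he_prefix : ∀ j ≤ p, ∑ i ∈ range j, e i = 1 - 1 / sylvesterProd j := fun j hj => by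
    rw [← sum_range_one_div_sylvesterProd_add_one]
    exact sum_congr rfl fun i hi => if_pos (by rw [mem_range] at hi; omega)
  have he_last : e p = 1 / sylvesterProd p - t := if_neg (lt_irrefl p)
  have he_tot : ∑ i ∈ range (p + 1), e i = 1 - t := by
    rw [sum_range_succ, he_prefix p le_rfl, he_last]
    ring
  have he_init : ∏ i ∈ range p, e i = 1 / sylvesterProd p := by
    rw [prod_congr rfl fun i hi => if_pos (mem_range.1 hi), ← prod_range_sylvesterProd_add_one]
    push_cast
    rw [prod_div_distrib, prod_const_one]
  have he_nonneg : ∀ i < p + 1, 0 ≤ e i := fun i _ => by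
    simp only [e]
    split_ifs
    · positivity
    · linarith
  have hmajorizes : ∀ j ≤ p + 1,
      ∑ i ∈ range j, (1 : ℝ) / y i ≤ ∑ i ∈ range j, e i := fun j hj => by
    rcases hj.lt_or_eq with hj | rfl
    · rw [he_prefix j (by omega)]
      linarith [hgap j (by omega)]
    · rw [he_tot, ht]
  calc 1 / sylvesterProd p * (1 / sylvesterProd p - t) = ∏ i ∈ range (p + 1), e i := by
        rw [prod_range_succ, he_init, he_last]
    _ ≤ ∏ i ∈ range (p + 1), (1 : ℝ) / y i :=
        prod_range_le_prod_of_majorizes (fun i hi => by have := hy i hi; positivity)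
          (fun i hi j hj hij => one_div_le_one_div_of_le (by exact_mod_cast hy i hi)
            (by exact_mod_cast hmono hi hj hij))
          he_nonneg hmajorizes (by rw [he_tot, ht])

/-- Curtiss' theorem (1922). -/
theorem one_div_sylvesterProd_le_one_sub_sum (m : ℕ) {y : ℕ → ℕ} (hy : ∀ i < m, 0 < y i)
    (hmono : MonotoneOn y (Set.Iio m)) (hlt : ∑ i ∈ range m, (1 : ℝ) / y i < 1) :
    1 / (sylvesterProd m : ℝ) ≤ 1 - ∑ i ∈ range m, (1 : ℝ) / y i := by
  induction m using Nat.strong_induction_on with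
  | _ m ih =>
    obtain _ | p := m
    · simp [sylvesterProd]
    set t := 1 - ∑ i ∈ range (p + 1), (1 : ℝ) / y i with ht
    set a : ℝ := (sylvesterProd p : ℝ)
    have ha : 0 < a := Nat.cast_pos.2 (sylvesterProd_pos p)
    have ha_succ : (sylvesterProd (p + 1) : ℝ) = a * (a + 1) := by
      rw [sylvesterProd]
      push_cast
      rfl
    -- the comparison sequence needs `t ≤ 1 / a`, so that its last term is nonnegative
    by_cases hat : 1 / a ≤ t
    · exact le_trans (one_div_le_one_div_of_le ha (Nat.cast_le.2 (sylvesterProd_le_succ p))) hat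
    have hgap : ∀ j ≤ p, 1 / (sylvesterProd j : ℝ) ≤ 1 - ∑ i ∈ range j, (1 : ℝ) / y i :=
      fun j hj => ih j (by omega) (fun i hi => hy i (by omega))
        (hmono.mono (Set.Iio_subset_Iio (by omega))) (lt_of_le_of_lt
          (sum_le_sum_of_subset_of_nonneg (range_subset_range.2 (by omega))
            fun i _ _ => by positivity) hlt)
    have hmaj := one_div_sylvesterProd_mul_le_prod hy hmono hgap (by rw [ht]; ring)
      (le_of_not_ge hat)
    have hintegral := one_div_prod_le_one_sub_sum (range (p + 1)) y
      (fun i hi => hy i (mem_range.1 hi)) hlt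
    rw [prod_div_distrib, prod_const_one, ← Nat.cast_prod] at hmaj
    have key : 1 / a * (1 / a - t) ≤ t := hmaj.trans hintegral
    rw [ha_succ, div_le_iff₀ (by positivity)]
    calc 1 = a * a * (1 / a * (1 / a - t)) + a * t := by field_simp; ring
      _ ≤ a * a * t + a * t := by gcongr
      _ = t * (a * (a + 1)) := by ring

theorem succ_le_of_sum_one_div_le_one {n : ℕ} {y : ℕ → ℕ} (hy : ∀ i < n, 0 < y i)
    (hmono : MonotoneOn y (Set.Iio n)) (hsum : ∑ i ∈ range n, (1 : ℝ) / y i ≤ 1)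
    {k : ℕ} (hk : k < n) : k + 1 ≤ y k := by
  have hyk : (0 : ℝ) < y k := by exact_mod_cast hy k hk
  have : ((k + 1 : ℕ) : ℝ) / y k ≤ 1 := calc
    ((k + 1 : ℕ) : ℝ) / y k = ∑ _i ∈ range (k + 1), (1 : ℝ) / y k := by
        rw [sum_const, card_range, nsmul_eq_mul, mul_one_div]
    _ ≤ ∑ i ∈ range (k + 1), (1 : ℝ) / y i := sum_le_sum fun i hi => by
        have hik : i ≤ k := Nat.lt_succ_iff.1 (mem_range.1 hi)
        exact one_div_le_one_div_of_le (by exact_mod_cast hy i (by omega))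
          (by exact_mod_cast hmono (show i < n by omega) hk hik)
    _ ≤ ∑ i ∈ range n, (1 : ℝ) / y i :=
        sum_le_sum_of_subset_of_nonneg (range_subset_range.2 hk) fun i _ _ => by positivity
    _ ≤ 1 := hsum
  exact_mod_cast (div_le_one hyk).1 this

theorem le_sylvesterProd_mul_of_sum_one_div_eq_one {n : ℕ} {y : ℕ → ℕ}
    (hy : ∀ i < n, 0 < y i) (hmono : MonotoneOn y (Set.Iio n))
    (hsum : ∑ i ∈ range n, (1 : ℝ) / y i = 1) {k : ℕ} (hk : k < n) :
    y k ≤ sylvesterProd k * (n - k) := by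
  have hyk : (0 : ℝ) < y k := by exact_mod_cast hy k hk
  have hsplit := sum_range_add_sum_Ico (fun i => (1 : ℝ) / y i) hk.le
  have htail_pos : 0 < ∑ i ∈ Ico k n, (1 : ℝ) / y i :=
    sum_pos' (fun i hi => by have := hy i (mem_Ico.1 hi).2; positivity)
      ⟨k, mem_Ico.2 ⟨le_rfl, hk⟩, by positivity⟩
  have hcurtiss := one_div_sylvesterProd_le_one_sub_sum k (fun i hi => hy i (by omega))
    (hmono.mono (Set.Iio_subset_Iio hk.le)) (by linarith)
  have htail : ∑ i ∈ Ico k n, (1 : ℝ) / y i ≤ ((n - k : ℕ) : ℝ) / y k := calc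
    _ ≤ ∑ _i ∈ Ico k n, (1 : ℝ) / y k := sum_le_sum fun i hi => by
        obtain ⟨hki, hin⟩ := mem_Ico.1 hi
        exact one_div_le_one_div_of_le hyk (by exact_mod_cast hmono hk hin hki)
    _ = ((n - k : ℕ) : ℝ) / y k := by rw [sum_const, Nat.card_Ico, nsmul_eq_mul, mul_one_div]
  have hbound : 1 / (sylvesterProd k : ℝ) ≤ ((n - k : ℕ) : ℝ) / y k := by linarith
  rw [div_le_div_iff₀ (by exact_mod_cast sylvesterProd_pos k) hyk, one_mul] at hbound
  exact_mod_cast hbound.trans_eq (mul_comm _ _)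

theorem hong_rowell_bounds_general (u : ℕ → ℕ) (hu1 : u 1 = 1)
    (hurec : ∀ k, 1 ≤ k → u (k + 1) = u k * (u k + 1))
    (n : ℕ) (x : ℕ → ℕ)
    (hxpos : ∀ i ∈ Finset.Icc 1 n, 0 < x i)
    (hmono : ∀ i j, 1 ≤ i → i ≤ j → j ≤ n → x i ≤ x j)
    (hsum : ∑ i ∈ Finset.Icc 1 n, (1 : ℚ) / (x i) = 1) :
    ∀ k ∈ Finset.Icc 1 n, k ≤ x k ∧ x k ≤ u k * (n - k + 1) := by
  have hu : ∀ j, u (j + 1) = sylvesterProd j := fun j => by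
    induction j with
    | zero => exact hu1
    | succ j ih => rw [hurec (j + 1) (by omega), ih, sylvesterProd]
  have hy : ∀ i < n, 0 < x (i + 1) := fun i hi => hxpos (i + 1) (mem_Icc.2 ⟨by omega, hi⟩)
  have hymono : MonotoneOn (fun i => x (i + 1)) (Set.Iio n) := fun i _ j hj hij =>
    hmono (i + 1) (j + 1) (by omega) (by omega) (Set.mem_Iio.1 hj)
  have hysum : ∑ i ∈ range n, (1 : ℝ) / x (i + 1) = 1 := by
    have hsum_real : ∑ i ∈ Icc 1 n, (1 : ℝ) / x i = 1 := by
      simpa using congrArg (Rat.cast : ℚ → ℝ) hsum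
    rw [range_eq_Ico, sum_Ico_add' (fun i => (1 : ℝ) / x i) 0 n 1]
    exact hsum_real
  intro k hk
  obtain ⟨hk1, hkn⟩ := mem_Icc.1 hk
  obtain ⟨j, rfl⟩ : ∃ j, k = j + 1 := ⟨k - 1, by omega⟩
  refine ⟨succ_le_of_sum_one_div_le_one hy hymono hysum.le hkn, ?_⟩
  rw [hu, show n - (j + 1) + 1 = n - j by omega]
  exact le_sylvesterProd_mul_of_sum_one_div_eq_one hy hymono hysum hkn

/-- Hong–Rowell Lemma 2.3: if `x 1 ≤ ⋯ ≤ x n` are positive integers with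
`∑_{i=1}^n 1 / x i = 1`, then `k ≤ x k ≤ u k * (n - k + 1)` for all `1 ≤ k ≤ n`,
where `u 1 = 1` and `u (k+1) = u k * (u k + 1)`. -/
theorem hong_rowell_bounds (u : ℕ → ℕ) (hu1 : u 1 = 1)
    (hurec : ∀ k, 1 ≤ k → u (k + 1) = u k * (u k + 1))
    (n : ℕ) (hn : 1 ≤ n) (x : ℕ → ℕ)
    (hxpos : ∀ i ∈ Finset.Icc 1 n, 0 < x i)
    (hmono : ∀ i j, 1 ≤ i → i ≤ j → j ≤ n → x i ≤ x j)
    (hsum : ∑ i ∈ Finset.Icc 1 n, (1 : ℚ) / (x i) = 1) :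
    ∀ k ∈ Finset.Icc 1 n, k ≤ x k ∧ x k ≤ u k * (n - k + 1) :=
  hong_rowell_bounds_general u hu1 hurec n x hxpos hmono hsum
end

section
/- The weakly increasing 5-tuples (x_1, x_2, x_3, x_4, x_5) of positive integers satisfying ∑_{i=1}^5 1/x_i = 1 and such that x_5/x_i is the square of a positive integer for every i are exactly (5,5,5,5,5) and (2,8,8,8,8). -/
-- auxiliary: d^2 ∣ k * a^2 with 0 < k ≤ 3 and 0 < a implies d ∣ a
lemma sq_dvd_aux (d a k : ℕ) (ha : 0 < a) (hk1 : 0 < k) (hk : k ≤ 3)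
    (h : d ^ 2 ∣ k * a ^ 2) : d ∣ a := by
  rcases Nat.eq_zero_or_pos d with hd | hd
  · subst hd
    simp at h
    rcases h with h | h
    · omega
    · omega
  · set g := Nat.gcd d a with hg
    have hgpos : 0 < g := Nat.gcd_pos_of_pos_right d ha
    have hdd : g ∣ d := Nat.gcd_dvd_left d a
    have hda : g ∣ a := Nat.gcd_dvd_right d a
    set d' := d / g with hd'def
    set a' := a / g with ha'def
    have hd' : d = g * d' := (Nat.mul_div_cancel' (Nat.gcd_dvd_left d a) ).symm
    have ha' : a = g * a' := (Nat.mul_div_cancel' (Nat.gcd_dvd_right d a)).symm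
    have hcop : Nat.Coprime d' a' := Nat.coprime_div_gcd_div_gcd hgpos
    have hdvd' : d' ^ 2 ∣ k * a' ^ 2 := by
      have h2 : g ^ 2 * d' ^ 2 ∣ g ^ 2 * (k * a' ^ 2) := by
        have : d ^ 2 = g ^ 2 * d' ^ 2 := by rw [hd']; ring
        have h3 : k * a ^ 2 = g ^ 2 * (k * a' ^ 2) := by rw [ha']; ring
        rw [this, h3] at h
        exact h
      exact (mul_dvd_mul_iff_left (by positivity : g ^ 2 ≠ 0)).mp h2
    have hcop2 : Nat.Coprime (d' ^ 2) (a' ^ 2) := Nat.Coprime.pow _ _ hcop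
    have hk' : d' ^ 2 ∣ k := (Nat.Coprime.dvd_of_dvd_mul_right hcop2) hdvd'
    have : d' ^ 2 ≤ 3 := le_trans (Nat.le_of_dvd hk1 hk') hk
    have hd'pos : 0 < d' := by
      rcases Nat.eq_zero_or_pos d' with h0 | h0
      · rw [h0, mul_zero] at hd'; omega
      · exact h0
    have : d' = 1 := by nlinarith
    rw [this, mul_one] at hd'
    rw [hd']
    exact ⟨a', ha'⟩

-- d ∣ n, d < n → 2d ≤ n
lemma dvd_half (d n : ℕ) (h : d ∣ n) (hlt : d < n) : 2 * d ≤ n := by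
  obtain ⟨m, rfl⟩ := h
  rcases Nat.lt_or_ge m 2 with hm | hm
  · interval_cases m <;> omega
  · nlinarith

-- d ∣ n, 2d < 2n... for k=4 case: d ∣ 2a, d < a → 3d ≤ 2a
lemma dvd_third (d a : ℕ) (h : d ∣ 2 * a) (hlt : d < a) : 3 * d ≤ 2 * a := by
  obtain ⟨m, hm⟩ := h
  rcases Nat.lt_or_ge m 3 with h3 | h3
  · interval_cases m <;> omega
  · nlinarith

lemma mul_sq_le (c a d b : ℕ) (h : c * a ≤ d * b) : c * c * a ^ 2 ≤ d * d * b ^ 2 := by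
  calc c * c * a ^ 2 = (c * a) * (c * a) := by ring
    _ ≤ (d * b) * (d * b) := Nat.mul_le_mul h h
    _ = d * d * b ^ 2 := by ring

lemma lt_of_sq_lt (a b : ℕ) (h : a ^ 2 < b ^ 2) : a < b := by
  by_contra hc
  push_neg at hc
  exact absurd (Nat.pow_le_pow_left hc 2) (by omega)

set_option maxHeartbeats 1600000 in
/-- Output of Algorithm 4.1 for rank `5`: the weakly increasing `5`-tuples of positive
integers with `∑ 1 / xᵢ = 1` and every `x₅ / xᵢ` a perfect square of a positive integer
are exactly `(5,5,5,5,5)` and `(2,8,8,8,8)`. -/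
theorem rank5_solutions (x1 x2 x3 x4 x5 : ℕ) :
    (0 < x1 ∧ x1 ≤ x2 ∧ x2 ≤ x3 ∧ x3 ≤ x4 ∧ x4 ≤ x5 ∧
      (1 : ℚ) / x1 + 1 / x2 + 1 / x3 + 1 / x4 + 1 / x5 = 1 ∧
      (∃ a : ℕ, 0 < a ∧ x5 = x1 * a ^ 2) ∧
      (∃ a : ℕ, 0 < a ∧ x5 = x2 * a ^ 2) ∧
      (∃ a : ℕ, 0 < a ∧ x5 = x3 * a ^ 2) ∧
      (∃ a : ℕ, 0 < a ∧ x5 = x4 * a ^ 2) ∧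
      (∃ a : ℕ, 0 < a ∧ x5 = x5 * a ^ 2)) ↔
    ((x1, x2, x3, x4, x5) = (5, 5, 5, 5, 5) ∨ (x1, x2, x3, x4, x5) = (2, 8, 8, 8, 8)) := by
  constructor
  · rintro ⟨p1, l12, l23, l34, l45, hsum, ⟨a1, q1, h1⟩, ⟨a2, q2, h2⟩, ⟨a3, q3, h3⟩, ⟨a4, q4, h4⟩, -⟩
    have p2 : 0 < x2 := lt_of_lt_of_le p1 l12
    have p3 : 0 < x3 := lt_of_lt_of_le p2 l23
    have p4 : 0 < x4 := lt_of_lt_of_le p3 l34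
    have p5 : 0 < x5 := lt_of_lt_of_le p4 l45
    -- key equation
    have keyfn : ∀ x a : ℕ, 0 < x → 0 < a → x5 = x * a ^ 2 → (1 : ℚ) / x = a ^ 2 / x5 := by
      intro x a hx haa hxa
      rw [hxa]; push_cast
      rw [eq_div_iff (by positivity)]
      field_simp
    have key : a1 ^ 2 + a2 ^ 2 + a3 ^ 2 + a4 ^ 2 + 1 = x5 := by
      rw [keyfn x1 a1 p1 q1 h1, keyfn x2 a2 p2 q2 h2, keyfn x3 a3 p3 q3 h3,
        keyfn x4 a4 p4 q4 h4] at hsum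
      have hx5 : (x5 : ℚ) ≠ 0 := by positivity
      field_simp at hsum
      exact_mod_cast hsum
    -- orderings of the a's
    have ordfn : ∀ x y a b : ℕ, 0 < x → x ≤ y → x5 = x * a ^ 2 → x5 = y * b ^ 2 → b ≤ a := by
      intro x y a b hx hxy hxa hyb
      by_contra hc
      push_neg at hc
      have h2 : a ^ 2 < b ^ 2 := Nat.pow_lt_pow_left hc (by norm_num)
      have h3 : x * a ^ 2 = y * b ^ 2 := hxa ▸ hyb
      nlinarith
    have o21 : a2 ≤ a1 := ordfn x1 x2 a1 a2 p1 l12 h1 h2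
    have o32 : a3 ≤ a2 := ordfn x2 x3 a2 a3 p2 l23 h2 h3
    have o43 : a4 ≤ a3 := ordfn x3 x4 a3 a4 p3 l34 h3 h4
    have c1 : 1 ≤ a1 ^ 2 := pow_pos q1 2
    have c2 : 1 ≤ a2 ^ 2 := pow_pos q2 2
    have c3 : 1 ≤ a3 ^ 2 := pow_pos q3 2
    have c4 : 1 ≤ a4 ^ 2 := pow_pos q4 2
    rcases Nat.lt_or_ge a1 2 with ha1 | ha1
    · -- a1 = 1, so all a's are 1 and x5 = 5
      have e1 : a1 = 1 := by omega
      have e2 : a2 = 1 := by omega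
      have e3 : a3 = 1 := by omega
      have e4 : a4 = 1 := by omega
      left
      subst e1 e2 e3 e4
      simp only [one_pow, mul_one] at h1 h2 h3 h4 key
      simp only [Prod.mk.injEq]
      refine ⟨by omega, by omega, by omega, by omega, by omega⟩
    · -- a1 ≥ 2
      right
      clear hsum keyfn ordfn
      have ha1sq : 4 ≤ a1 ^ 2 := by
        have h := mul_sq_le 1 2 1 a1 (by omega)
        norm_num at h
        linarith
      have b2 : a2 ^ 2 ≤ a1 ^ 2 := Nat.pow_le_pow_left o21 2
      have b3 : a3 ^ 2 ≤ a1 ^ 2 := Nat.pow_le_pow_left (le_trans o32 o21) 2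
      have b4 : a4 ^ 2 ≤ a1 ^ 2 := Nat.pow_le_pow_left (le_trans o43 (le_trans o32 o21)) 2
      have hx1ge : 2 ≤ x1 := by
        rcases Nat.lt_or_ge x1 2 with h | h
        · exfalso
          have hx1e : x1 = 1 := by omega
          rw [hx1e, one_mul] at h1
          rw [← h1] at key
          linarith
        · exact h
      have hle : x1 * a1 ^ 2 ≤ 4 * a1 ^ 2 + 1 := by
        rw [← h1]
        linarith
      have hx1le : x1 ≤ 4 := by
        by_contra hc
        push_neg at hc
        have h5 : 5 * a1 ^ 2 ≤ x1 * a1 ^ 2 := Nat.mul_le_mul_right _ (by omega)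
        linarith
      -- divisibility facts
      have dv2 : a2 ^ 2 ∣ x1 * a1 ^ 2 := by rw [← h1, h2]; exact dvd_mul_left _ _
      have dv3 : a3 ^ 2 ∣ x1 * a1 ^ 2 := by rw [← h1, h3]; exact dvd_mul_left _ _
      have dv4 : a4 ^ 2 ∣ x1 * a1 ^ 2 := by rw [← h1, h4]; exact dvd_mul_left _ _
      interval_cases x1
      · -- x1 = 2
        have keq : a2 ^ 2 + a3 ^ 2 + a4 ^ 2 + 1 = a1 ^ 2 := by
          have := h1 ▸ key
          linarith
        have d2 : a2 ∣ a1 := sq_dvd_aux a2 a1 2 (by omega) (by omega) (by omega) dv2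
        have d3 : a3 ∣ a1 := sq_dvd_aux a3 a1 2 (by omega) (by omega) (by omega) dv3
        have d4 : a4 ∣ a1 := sq_dvd_aux a4 a1 2 (by omega) (by omega) (by omega) dv4
        have hlt2 : a2 < a1 := lt_of_sq_lt _ _ (by linarith)
        have hb2 : 2 * a2 ≤ a1 := dvd_half a2 a1 d2 hlt2
        have hb3 : 2 * a3 ≤ a1 := dvd_half a3 a1 d3 (by omega)
        have hb4 : 2 * a4 ≤ a1 := dvd_half a4 a1 d4 (by omega)
        have s2 : 4 * a2 ^ 2 ≤ a1 ^ 2 := by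
          have h' := mul_sq_le 2 a2 1 a1 (by omega)
          norm_num at h'
          linarith
        have s3 : 4 * a3 ^ 2 ≤ a1 ^ 2 := by
          have h' := mul_sq_le 2 a3 1 a1 (by omega)
          norm_num at h'
          linarith
        have s4 : 4 * a4 ^ 2 ≤ a1 ^ 2 := by
          have h' := mul_sq_le 2 a4 1 a1 (by omega)
          norm_num at h'
          linarith
        have hsq4 : a1 ^ 2 ≤ 4 := by linarith
        have ha1e : a1 = 2 := by
          by_contra hne
          have h3a : 3 ≤ a1 := by omega
          have h := mul_sq_le 1 3 1 a1 (by omega)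
          norm_num at h
          linarith
        have e2 : a2 = 1 := by omega
        have e3 : a3 = 1 := by omega
        have e4 : a4 = 1 := by omega
        subst ha1e e2 e3 e4
        simp only [one_pow, mul_one] at h2 h3 h4
        norm_num at h1
        simp only [Prod.mk.injEq]
        refine ⟨trivial, by omega, by omega, by omega, by omega⟩
      · -- x1 = 3 : impossible
        exfalso
        have keq : a2 ^ 2 + a3 ^ 2 + a4 ^ 2 + 1 = 2 * a1 ^ 2 := by
          have := h1 ▸ key
          linarith
        have d2 : a2 ∣ a1 := sq_dvd_aux a2 a1 3 (by omega) (by omega) (by omega) dv2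
        have d3 : a3 ∣ a1 := sq_dvd_aux a3 a1 3 (by omega) (by omega) (by omega) dv3
        have d4 : a4 ∣ a1 := sq_dvd_aux a4 a1 3 (by omega) (by omega) (by omega) dv4
        rcases eq_or_lt_of_le o21 with he | hlt2
        · -- a2 = a1
          rw [he] at keq
          have hlt3 : a3 < a1 := lt_of_sq_lt _ _ (by linarith)
          have hb3 : 2 * a3 ≤ a1 := dvd_half a3 a1 d3 hlt3
          have hb4 : 2 * a4 ≤ a1 := dvd_half a4 a1 d4 (by omega)
          have s3 : 4 * a3 ^ 2 ≤ a1 ^ 2 := by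
            have h' := mul_sq_le 2 a3 1 a1 (by omega)
            norm_num at h'
            linarith
          have s4 : 4 * a4 ^ 2 ≤ a1 ^ 2 := by
            have h' := mul_sq_le 2 a4 1 a1 (by omega)
            norm_num at h'
            linarith
          linarith
        · have hb2 : 2 * a2 ≤ a1 := dvd_half a2 a1 d2 hlt2
          have hb3 : 2 * a3 ≤ a1 := dvd_half a3 a1 d3 (by omega)
          have hb4 : 2 * a4 ≤ a1 := dvd_half a4 a1 d4 (by omega)
          have s2 : 4 * a2 ^ 2 ≤ a1 ^ 2 := by
            have h' := mul_sq_le 2 a2 1 a1 (by omega)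
            norm_num at h'
            linarith
          have s3 : 4 * a3 ^ 2 ≤ a1 ^ 2 := by
            have h' := mul_sq_le 2 a3 1 a1 (by omega)
            norm_num at h'
            linarith
          have s4 : 4 * a4 ^ 2 ≤ a1 ^ 2 := by
            have h' := mul_sq_le 2 a4 1 a1 (by omega)
            norm_num at h'
            linarith
          linarith
      · -- x1 = 4 : impossible
        exfalso
        have keq : a2 ^ 2 + a3 ^ 2 + a4 ^ 2 + 1 = 3 * a1 ^ 2 := by
          have := h1 ▸ key
          linarith
        have dveq : 1 * (2 * a1) ^ 2 = 4 * a1 ^ 2 := by ring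
        have d2 : a2 ∣ 2 * a1 :=
          sq_dvd_aux a2 (2 * a1) 1 (by omega) (by omega) (by omega) (dveq ▸ dv2)
        have d3 : a3 ∣ 2 * a1 :=
          sq_dvd_aux a3 (2 * a1) 1 (by omega) (by omega) (by omega) (dveq ▸ dv3)
        have d4 : a4 ∣ 2 * a1 :=
          sq_dvd_aux a4 (2 * a1) 1 (by omega) (by omega) (by omega) (dveq ▸ dv4)
        rcases eq_or_lt_of_le o21 with he2 | hlt2
        · rw [he2] at keq
          have o31 : a3 ≤ a1 := he2 ▸ o32
          rcases eq_or_lt_of_le o31 with he3 | hlt3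
          · rw [he3] at keq
            have hlt4 : a4 < a1 := lt_of_sq_lt _ _ (by linarith)
            have hb4 : 3 * a4 ≤ 2 * a1 := dvd_third a4 a1 d4 hlt4
            have t4 : 9 * a4 ^ 2 ≤ 4 * a1 ^ 2 := by
              have h' := mul_sq_le 3 a4 2 a1 (by omega)
              norm_num at h'
              linarith
            linarith
          · have hb3 : 3 * a3 ≤ 2 * a1 := dvd_third a3 a1 d3 hlt3
            have hb4 : 3 * a4 ≤ 2 * a1 := dvd_third a4 a1 d4 (by omega)
            have t3 : 9 * a3 ^ 2 ≤ 4 * a1 ^ 2 := by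
              have h' := mul_sq_le 3 a3 2 a1 (by omega)
              norm_num at h'
              linarith
            have t4 : 9 * a4 ^ 2 ≤ 4 * a1 ^ 2 := by
              have h' := mul_sq_le 3 a4 2 a1 (by omega)
              norm_num at h'
              linarith
            linarith
        · have hb2 : 3 * a2 ≤ 2 * a1 := dvd_third a2 a1 d2 hlt2
          have hb3 : 3 * a3 ≤ 2 * a1 := dvd_third a3 a1 d3 (by omega)
          have hb4 : 3 * a4 ≤ 2 * a1 := dvd_third a4 a1 d4 (by omega)
          have t2 : 9 * a2 ^ 2 ≤ 4 * a1 ^ 2 := by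
            have h' := mul_sq_le 3 a2 2 a1 (by omega)
            norm_num at h'
            linarith
          have t3 : 9 * a3 ^ 2 ≤ 4 * a1 ^ 2 := by
            have h' := mul_sq_le 3 a3 2 a1 (by omega)
            norm_num at h'
            linarith
          have t4 : 9 * a4 ^ 2 ≤ 4 * a1 ^ 2 := by
            have h' := mul_sq_le 3 a4 2 a1 (by omega)
            norm_num at h'
            linarith
          linarith
  · rintro (h | h) <;> simp only [Prod.mk.injEq] at h
    · obtain ⟨rfl, rfl, rfl, rfl, rfl⟩ := h
      refine ⟨by norm_num, by norm_num, by norm_num, by norm_num, by norm_num, by norm_num,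
        ⟨1, by norm_num⟩, ⟨1, by norm_num⟩, ⟨1, by norm_num⟩, ⟨1, by norm_num⟩, ⟨1, by norm_num⟩⟩
    · obtain ⟨rfl, rfl, rfl, rfl, rfl⟩ := h
      refine ⟨by norm_num, by norm_num, by norm_num, by norm_num, by norm_num, by norm_num,
        ⟨2, by norm_num⟩, ⟨1, by norm_num⟩, ⟨1, by norm_num⟩, ⟨1, by norm_num⟩, ⟨1, by norm_num⟩⟩
end

section
/- The only weakly increasing 4-tuple (x_1, x_2, x_3, x_4) of positive integers satisfying 2/x_1 + 2/x_2 + 2/x_3 + 1/x_4 = 1 and such that x_4/x_i is the square of a positive integer for every i is (7,7,7,7). -/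
set_option maxRecDepth 10000 in

set_option maxHeartbeats 4000000 in
set_option synthInstance.maxHeartbeats 1000000 in
set_option synthInstance.maxSize 100000 in
lemma mnsd_key : ∀ x1 < 8, ∀ x2 < 16, ∀ x3 < 64,
    3 ≤ x1 → x1 ≤ x2 → x2 ≤ x3 →
    2*x2*x3 + 2*x1*x3 + 2*x1*x2 < x1*x2*x3 →
    (x1*x2*x3) % (x1*x2*x3 - (2*x2*x3 + 2*x1*x3 + 2*x1*x2)) = 0 →
    x3 ≤ x1*x2*x3 / (x1*x2*x3 - (2*x2*x3 + 2*x1*x3 + 2*x1*x2)) →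
    (∃ a < 64, x1*x2*x3 / (x1*x2*x3 - (2*x2*x3 + 2*x1*x3 + 2*x1*x2)) = x1 * a^2) →
    (∃ a < 64, x1*x2*x3 / (x1*x2*x3 - (2*x2*x3 + 2*x1*x3 + 2*x1*x2)) = x2 * a^2) →
    (∃ a < 64, x1*x2*x3 / (x1*x2*x3 - (2*x2*x3 + 2*x1*x3 + 2*x1*x2)) = x3 * a^2) →
    x1 = 7 ∧ x2 = 7 ∧ x3 = 7 := by decide


/-- MNSD rank `7` (`k = 3`): the only weakly increasing `4`-tuple of positive integers
with `2/x₁ + 2/x₂ + 2/x₃ + 1/x₄ = 1` and every `x₄ / xᵢ` a perfect square of a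
positive integer is `(7,7,7,7)`. -/
theorem mnsd_rank7_solutions (x1 x2 x3 x4 : ℕ) :
    (0 < x1 ∧ x1 ≤ x2 ∧ x2 ≤ x3 ∧ x3 ≤ x4 ∧
      (2 : ℚ) / x1 + 2 / x2 + 2 / x3 + 1 / x4 = 1 ∧
      (∃ a : ℕ, 0 < a ∧ x4 = x1 * a ^ 2) ∧
      (∃ a : ℕ, 0 < a ∧ x4 = x2 * a ^ 2) ∧
      (∃ a : ℕ, 0 < a ∧ x4 = x3 * a ^ 2) ∧
      (∃ a : ℕ, 0 < a ∧ x4 = x4 * a ^ 2)) ↔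
    (x1, x2, x3, x4) = (7, 7, 7, 7) := by
  constructor
  · rintro ⟨hx1, h12, h23, h34, heq, ⟨a1, ha1, e1⟩, ⟨a2, ha2, e2⟩, ⟨a3, ha3, e3⟩, -⟩
    have hx2 : 0 < x2 := lt_of_lt_of_le hx1 h12
    have hx3 : 0 < x3 := lt_of_lt_of_le hx2 h23
    have hx4 : 0 < x4 := lt_of_lt_of_le hx3 h34
    have c1 : (x1 : ℚ) ≠ 0 := Nat.cast_ne_zero.mpr hx1.ne'
    have c2 : (x2 : ℚ) ≠ 0 := Nat.cast_ne_zero.mpr hx2.ne'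
    have c3 : (x3 : ℚ) ≠ 0 := Nat.cast_ne_zero.mpr hx3.ne'
    have c4 : (x4 : ℚ) ≠ 0 := Nat.cast_ne_zero.mpr hx4.ne'
    have E : 2*x2*x3*x4 + 2*x1*x3*x4 + 2*x1*x2*x4 + x1*x2*x3 = x1*x2*x3*x4 := by
      field_simp at heq
      have h : (2*x2*x3*x4 + 2*x1*x3*x4 + 2*x1*x2*x4 + x1*x2*x3 : ℚ)
          = (x1*x2*x3*x4 : ℚ) := by push_cast; linarith [heq]
      exact_mod_cast h
    have hsub : (x1*x2*x3 - (2*x2*x3 + 2*x1*x3 + 2*x1*x2)) * x4 = x1*x2*x3 := by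
      rw [Nat.sub_mul]
      exact Nat.sub_eq_of_eq_add (by linarith [E])
    have hPpos : 0 < x1*x2*x3 := by positivity
    have hSP : 2*x2*x3 + 2*x1*x3 + 2*x1*x2 < x1*x2*x3 := by
      by_contra hcon
      push_neg at hcon
      rw [Nat.sub_eq_zero_of_le hcon, zero_mul] at hsub
      exact hPpos.ne' hsub.symm
    have hPS : 0 < x1*x2*x3 - (2*x2*x3 + 2*x1*x3 + 2*x1*x2) := Nat.sub_pos_of_lt hSP
    have hx4eq : x4 = x1*x2*x3 / (x1*x2*x3 - (2*x2*x3 + 2*x1*x3 + 2*x1*x2)) :=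
      (Nat.div_eq_of_eq_mul_left hPS (by linarith [hsub])).symm
    have hmod : (x1*x2*x3) % (x1*x2*x3 - (2*x2*x3 + 2*x1*x3 + 2*x1*x2)) = 0 :=
      Nat.mod_eq_zero_of_dvd ⟨x4, hsub.symm⟩
    -- bounds
    have b1 : 3 ≤ x1 := by
      by_contra hc
      push_neg at hc
      interval_cases x1 <;>
        linarith [E, Nat.mul_pos (Nat.mul_pos hx2 hx3) hx4, Nat.mul_pos hx2 hx3,
          Nat.mul_pos hx2 hx4, Nat.mul_pos hx3 hx4, Nat.mul_pos (Nat.mul_pos hx2 hx3) hx4,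
          Nat.mul_pos (Nat.mul_pos hx3 hx4) hx2]
    have m1 : x1*(x3*x4) ≤ x2*(x3*x4) := Nat.mul_le_mul_right _ h12
    have m2 : x1*(x2*x4) ≤ x3*(x2*x4) := Nat.mul_le_mul_right _ (h12.trans h23)
    have m3 : x1*(x2*x3) ≤ x4*(x2*x3) := Nat.mul_le_mul_right _ ((h12.trans h23).trans h34)
    have b1' : x1 ≤ 7 := by
      have h7 : (x2*(x3*x4))*x1 ≤ (x2*(x3*x4))*7 := by linarith [E, m1, m2, m3]
      exact Nat.le_of_mul_le_mul_left h7 (by positivity)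
    have m4 : x2*(x1*x4) ≤ x3*(x1*x4) := Nat.mul_le_mul_right _ h23
    have m5 : x2*(x1*x3) ≤ x4*(x1*x3) := Nat.mul_le_mul_right _ (h23.trans h34)
    have s2 : x1*x2 ≤ 2*x2 + 5*x1 := by
      have h15 : (x3*x4)*(x1*x2) ≤ (x3*x4)*(2*x2 + 5*x1) := by linarith [E, m4, m5]
      exact Nat.le_of_mul_le_mul_left h15 (by positivity)
    have b2 : x2 ≤ 15 := by interval_cases x1 <;> omega
    have m6 : x3*(x1*x2) ≤ x4*(x1*x2) := Nat.mul_le_mul_right _ h34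
    have s3 : x1*x2*x3 ≤ 2*x2*x3 + 2*x1*x3 + 3*x1*x2 := by
      have h33 : x4*(x1*x2*x3) ≤ x4*(2*x2*x3 + 2*x1*x3 + 3*x1*x2) := by linarith [E, m6]
      exact Nat.le_of_mul_le_mul_left h33 hx4
    have b3 : x3 ≤ 63 := by interval_cases x1 <;> interval_cases x2 <;> omega
    -- bound on x4 and the aᵢ
    have hx4P : x4 ≤ x1*x2*x3 := by
      calc x4 ≤ (x1*x2*x3 - (2*x2*x3 + 2*x1*x3 + 2*x1*x2)) * x4 :=
            Nat.le_mul_of_pos_left x4 hPS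
        _ = x1*x2*x3 := hsub
    have hP66 : x1*x2*x3 ≤ 6615 := by
      calc x1*x2*x3 ≤ 7*15*63 :=
            Nat.mul_le_mul (Nat.mul_le_mul b1' b2) b3
        _ = 6615 := by norm_num
    have ab : ∀ a : ℕ, ∀ y : ℕ, 3 ≤ y → x4 = y * a^2 → a < 64 := by
      intro a y hy he
      have h0 : 3 * a^2 ≤ y * a^2 := Nat.mul_le_mul_right _ hy
      have h1 : 3 * a^2 ≤ 6615 := by linarith [hx4P, hP66]
      by_contra hc
      push_neg at hc
      have h2 : 64 * 64 ≤ a * a := Nat.mul_le_mul hc hc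
      have h3 : a^2 = a*a := sq a
      linarith
    have hb1 : a1 < 64 := ab a1 x1 b1 e1
    have hb2 : a2 < 64 := ab a2 x2 (b1.trans h12) e2
    have hb3 : a3 < 64 := ab a3 x3 (b1.trans (h12.trans h23)) e3
    obtain ⟨q1, q2, q3⟩ := mnsd_key x1 (by omega) x2 (by omega) x3 (by omega)
      b1 h12 h23 hSP hmod (hx4eq ▸ h34)
      ⟨a1, hb1, hx4eq ▸ e1⟩ ⟨a2, hb2, hx4eq ▸ e2⟩ ⟨a3, hb3, hx4eq ▸ e3⟩
    subst q1; subst q2; subst q3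
    have : x4 = 7 := by omega
    subst this
    rfl
  · intro h
    have h1 : x1 = 7 := congrArg (fun p => p.1) h
    have h2 : x2 = 7 := congrArg (fun p => p.2.1) h
    have h3 : x3 = 7 := congrArg (fun p => p.2.2.1) h
    have h4 : x4 = 7 := congrArg (fun p => p.2.2.2) h
    subst h1; subst h2; subst h3; subst h4
    refine ⟨by norm_num, le_refl _, le_refl _, le_refl _, by norm_num,
      ⟨1, one_pos, by norm_num⟩, ⟨1, one_pos, by norm_num⟩,
      ⟨1, one_pos, by norm_num⟩, ⟨1, one_pos, by norm_num⟩⟩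
end

section
/- The only weakly increasing 5-tuple (x_1, x_2, x_3, x_4, x_5) of positive integers satisfying 2/x_1 + 2/x_2 + 2/x_3 + 2/x_4 + 1/x_5 = 1 and such that x_5/x_i is the square of a positive integer for every i is (9,9,9,9,9). -/
/-- An odd square is `1` mod `8`, in the explicit form `d^2 = 8*k + 1`. -/
lemma odd_sq_mod8 (d : ℕ) (hd : Odd d) : ∃ k, d ^ 2 = 8 * k + 1 := by
  obtain ⟨m, rfl⟩ := hd
  obtain ⟨t, ht⟩ := Nat.even_mul_succ_self m
  exact ⟨t, by nlinarith⟩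

/-- MNSD rank `9` (`k = 4`): the only weakly increasing `5`-tuple of positive integers
with `2/x₁ + 2/x₂ + 2/x₃ + 2/x₄ + 1/x₅ = 1` and every `x₅ / xᵢ` a perfect square of a
positive integer is `(9,9,9,9,9)`. -/
theorem mnsd_rank9_solutions (x1 x2 x3 x4 x5 : ℕ) :
    (0 < x1 ∧ x1 ≤ x2 ∧ x2 ≤ x3 ∧ x3 ≤ x4 ∧ x4 ≤ x5 ∧
      (2 : ℚ) / x1 + 2 / x2 + 2 / x3 + 2 / x4 + 1 / x5 = 1 ∧
      (∃ a : ℕ, 0 < a ∧ x5 = x1 * a ^ 2) ∧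
      (∃ a : ℕ, 0 < a ∧ x5 = x2 * a ^ 2) ∧
      (∃ a : ℕ, 0 < a ∧ x5 = x3 * a ^ 2) ∧
      (∃ a : ℕ, 0 < a ∧ x5 = x4 * a ^ 2) ∧
      (∃ a : ℕ, 0 < a ∧ x5 = x5 * a ^ 2)) ↔
    (x1, x2, x3, x4, x5) = (9, 9, 9, 9, 9) := by
  constructor
  · rintro ⟨h1, h12, h23, h34, h45, heq, ⟨d1, hd1, he1⟩, ⟨d2, hd2, he2⟩,
      ⟨d3, hd3, he3⟩, ⟨d4, hd4, he4⟩, -⟩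
    have h2 : 0 < x2 := lt_of_lt_of_le h1 h12
    have h3 : 0 < x3 := lt_of_lt_of_le h2 h23
    have h4 : 0 < x4 := lt_of_lt_of_le h3 h34
    have h5 : 0 < x5 := lt_of_lt_of_le h4 h45
    -- the key integer identity: x5 = 2(d1²+d2²+d3²+d4²)+1
    have key : x5 = 2 * d1 ^ 2 + 2 * d2 ^ 2 + 2 * d3 ^ 2 + 2 * d4 ^ 2 + 1 := by
      have q1 : (x1 : ℚ) ≠ 0 := Nat.cast_ne_zero.mpr h1.ne'
      have q2 : (x2 : ℚ) ≠ 0 := Nat.cast_ne_zero.mpr h2.ne'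
      have q3 : (x3 : ℚ) ≠ 0 := Nat.cast_ne_zero.mpr h3.ne'
      have q4 : (x4 : ℚ) ≠ 0 := Nat.cast_ne_zero.mpr h4.ne'
      have q5 : (x5 : ℚ) ≠ 0 := Nat.cast_ne_zero.mpr h5.ne'
      have e1 : (x5 : ℚ) = x1 * d1 ^ 2 := by exact_mod_cast congrArg (Nat.cast : ℕ → ℚ) he1
      have e2 : (x5 : ℚ) = x2 * d2 ^ 2 := by exact_mod_cast congrArg (Nat.cast : ℕ → ℚ) he2
      have e3 : (x5 : ℚ) = x3 * d3 ^ 2 := by exact_mod_cast congrArg (Nat.cast : ℕ → ℚ) he3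
      have e4 : (x5 : ℚ) = x4 * d4 ^ 2 := by exact_mod_cast congrArg (Nat.cast : ℕ → ℚ) he4
      have : (x5 : ℚ) = 2 * d1 ^ 2 + 2 * d2 ^ 2 + 2 * d3 ^ 2 + 2 * d4 ^ 2 + 1 := by
        have hm : (x5 : ℚ) * (2 / x1 + 2 / x2 + 2 / x3 + 2 / x4 + 1 / x5) = x5 := by
          rw [heq, mul_one]
        field_simp at hm
        have r1 : (x5 : ℚ) / x1 = d1 ^ 2 := by rw [e1]; field_simp
        have r2 : (x5 : ℚ) / x2 = d2 ^ 2 := by rw [e2]; field_simp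
        have r3 : (x5 : ℚ) / x3 = d3 ^ 2 := by rw [e3]; field_simp
        have r4 : (x5 : ℚ) / x4 = d4 ^ 2 := by rw [e4]; field_simp
        have hm2 : (x5 : ℚ) * (2 / x1 + 2 / x2 + 2 / x3 + 2 / x4 + 1 / x5) = x5 := by
          rw [heq, mul_one]
        calc (x5 : ℚ) = x5 * (2 / x1 + 2 / x2 + 2 / x3 + 2 / x4 + 1 / x5) := hm2.symm
          _ = 2 * ((x5:ℚ)/x1) + 2 * ((x5:ℚ)/x2) + 2 * ((x5:ℚ)/x3) + 2 * ((x5:ℚ)/x4)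
              + x5 / x5 := by ring
          _ = 2 * d1 ^ 2 + 2 * d2 ^ 2 + 2 * d3 ^ 2 + 2 * d4 ^ 2 + 1 := by
              rw [r1, r2, r3, r4, div_self q5]
      exact_mod_cast this
    -- x5 is odd, hence every dᵢ is odd
    have hx5odd : Odd x5 := ⟨d1 ^ 2 + d2 ^ 2 + d3 ^ 2 + d4 ^ 2, by omega⟩
    have hodd : ∀ (x d : ℕ), x5 = x * d ^ 2 → Odd d := by
      intro x d he
      rcases Nat.even_or_odd d with hev | hod
      · exfalso
        obtain ⟨r, hr⟩ := hev
        have : Even x5 := ⟨2 * x * r ^ 2, by rw [he, hr]; ring⟩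
        exact (Nat.not_even_iff_odd.mpr hx5odd) this
      · exact hod
    obtain ⟨k1, hk1⟩ := odd_sq_mod8 d1 (hodd x1 d1 he1)
    obtain ⟨k2, hk2⟩ := odd_sq_mod8 d2 (hodd x2 d2 he2)
    obtain ⟨k3, hk3⟩ := odd_sq_mod8 d3 (hodd x3 d3 he3)
    obtain ⟨k4, hk4⟩ := odd_sq_mod8 d4 (hodd x4 d4 he4)
    -- x1 ≥ 3
    have hx1ge3 : 3 ≤ x1 := by
      by_contra hlt
      push_neg at hlt
      have hle : x1 * d1 ^ 2 ≤ 2 * d1 ^ 2 := Nat.mul_le_mul_right _ (by omega)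
      linarith [he1, key]
    -- x1 ≡ 1 mod 8, so x1 ≥ 9
    have hlin : x5 = 8 * (x1 * k1) + x1 := by
      calc x5 = x1 * d1 ^ 2 := he1
        _ = x1 * (8 * k1 + 1) := by rw [hk1]
        _ = 8 * (x1 * k1) + x1 := by ring
    have hx1ge9 : 9 ≤ x1 := by omega
    -- all of x2,x3,x4 ≥ 9 too; bound x5 from above
    have b1 : 9 * d1 ^ 2 ≤ x5 := by
      rw [he1]; exact Nat.mul_le_mul_right _ hx1ge9
    have b2 : 9 * d2 ^ 2 ≤ x5 := by
      rw [he2]; exact Nat.mul_le_mul_right _ (by omega)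
    have b3 : 9 * d3 ^ 2 ≤ x5 := by
      rw [he3]; exact Nat.mul_le_mul_right _ (by omega)
    have b4 : 9 * d4 ^ 2 ≤ x5 := by
      rw [he4]; exact Nat.mul_le_mul_right _ (by omega)
    have hx5le9 : x5 ≤ 9 := by linarith [key]
    have : x1 = 9 ∧ x2 = 9 ∧ x3 = 9 ∧ x4 = 9 ∧ x5 = 9 := by omega
    simp [this.1, this.2.1, this.2.2.1, this.2.2.2.1, this.2.2.2.2]
  · rintro h
    injection h with h1 h
    injection h with h2 h
    injection h with h3 h
    injection h with h4 h5
    subst h1; subst h2; subst h3; subst h4; subst h5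
    refine ⟨by norm_num, le_refl _, le_refl _, le_refl _, le_refl _, by norm_num,
      ⟨1, by norm_num⟩, ⟨1, by norm_num⟩, ⟨1, by norm_num⟩, ⟨1, by norm_num⟩, ⟨1, by norm_num⟩⟩
end

section
/- The weakly increasing 6-tuples (x_1, ..., x_6) of positive integers satisfying 2/x_1 + 2/x_2 + 2/x_3 + 2/x_4 + 2/x_5 + 1/x_6 = 1 and such that x_6/x_i is the square of a positive integer for every i are exactly (11,11,11,11,11,11) and (3,27,27,27,27,27). -/
/-!
Write `x₆ = xᵢ aᵢ²`. Clearing denominators turns the equation into `x₆ = 2 (a₁² + ⋯ + a₅²) + 1`,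
so `x₆` and every `aᵢ` are odd, and `a₁ ≥ ⋯ ≥ a₅` because the `xᵢ` increase. Odd squares are
`1 mod 8`, so `x₁ a₁² = x₆` gives `x₁ ≡ 11 mod 8`, while `x₁ a₁² ≤ 10 a₁² + 1` gives `x₁ ≤ 11`;
hence `x₁ = 11`, which forces all `aᵢ = 1`, or `x₁ = 3`. In the latter case `a₂² ∣ x₆ = 3 a₁²`
and `3` is squarefree, so `a₁ = k a₂` with `k` odd and `k ≠ 1`, and
`9 a₂² ≤ a₁² = 2 (a₂² + ⋯ + a₅²) + 1 ≤ 8 a₂² + 1` leaves only `a₂ = ⋯ = a₅ = 1`, `a₁ = 3`.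
-/

theorem Nat.dvd_of_sq_dvd_mul_sq {n a b : ℕ} (hn : Squarefree n) (h : a ^ 2 ∣ n * b ^ 2) :
    a ∣ b := by
  rcases Nat.eq_zero_or_pos (a.gcd b) with hg | hg
  · simp [(Nat.gcd_eq_zero_iff.mp hg).2]
  obtain ⟨g, u, v, hg, huv, rfl, rfl⟩ := Nat.exists_coprime' hg
  have huv' : u ^ 2 ∣ n * v ^ 2 := by
    rw [mul_pow, mul_pow, ← mul_assoc] at h
    exact (Nat.mul_dvd_mul_iff_right (by positivity)).mp h
  have hu : u * u ∣ n := by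
    rw [← sq]
    exact (huv.pow 2 2).dvd_of_dvd_mul_right huv'
  rw [Nat.isUnit_iff.mp (hn u hu), one_mul]
  exact dvd_mul_left g v

theorem Nat.sq_modEq_one_of_odd {a : ℕ} (ha : Odd a) : a ^ 2 ≡ 1 [MOD 8] := by
  obtain ⟨k, rfl⟩ := ha
  obtain ⟨m, hm⟩ := Nat.even_mul_succ_self k
  have : (2 * k + 1) ^ 2 = 8 * m + 1 := by nlinarith
  rw [this, Nat.ModEq]
  omega

theorem Nat.le_of_mul_sq_eq_mul_sq {x y a b : ℕ} (hx : 0 < x) (hxy : x ≤ y)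
    (h : x * a ^ 2 = y * b ^ 2) : b ≤ a := by
  have : x * b ^ 2 ≤ x * a ^ 2 := h ▸ Nat.mul_le_mul_right _ hxy
  exact (Nat.pow_le_pow_iff_left two_ne_zero).mp (Nat.le_of_mul_le_mul_left this hx)

theorem sum_two_div_add_one_div_eq_one_iff {ι : Type*} (s : Finset ι) {x a : ι → ℕ} {N : ℕ}
    (hN : N ≠ 0) (h : ∀ i ∈ s, N = x i * a i ^ 2) :
    ∑ i ∈ s, (2 : ℚ) / x i + 1 / N = 1 ↔ N = 2 * ∑ i ∈ s, a i ^ 2 + 1 := by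
  have hterm : ∀ i ∈ s, (2 : ℚ) / x i = 2 * a i ^ 2 / N := by
    intro i hi
    have hNi : (N : ℚ) = x i * a i ^ 2 := by exact_mod_cast h i hi
    have hai : (a i : ℚ) ^ 2 ≠ 0 := right_ne_zero_of_mul (hNi ▸ Nat.cast_ne_zero.mpr hN)
    rw [hNi, mul_div_mul_right _ _ hai]
  rw [Finset.sum_congr rfl hterm, ← Finset.sum_div, ← add_div,
    div_eq_one_iff_eq (by exact_mod_cast hN), eq_comm, ← Finset.mul_sum]
  exact_mod_cast Iff.rfl

section ReducedEquation

variable {x a₁ a₂ a₃ a₄ a₅ : ℕ}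

theorem eq_three_or_eq_eleven_of_mul_sq_eq
    (h₁ : Odd a₁) (h₂ : Odd a₂) (h₃ : Odd a₃) (h₄ : Odd a₄) (h₅ : Odd a₅)
    (h₂₁ : a₂ ≤ a₁) (h₃₂ : a₃ ≤ a₂) (h₄₃ : a₄ ≤ a₃) (h₅₄ : a₅ ≤ a₄)
    (h : x * a₁ ^ 2 = 2 * (a₁ ^ 2 + a₂ ^ 2 + a₃ ^ 2 + a₄ ^ 2 + a₅ ^ 2) + 1) :
    x = 3 ∨ x = 11 := by
  have hmod : x ≡ 11 [MOD 8] :=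
    calc x = x * 1 := (mul_one x).symm
      _ ≡ x * a₁ ^ 2 [MOD 8] := ((Nat.sq_modEq_one_of_odd h₁).mul_left x).symm
      _ = 2 * (a₁ ^ 2 + a₂ ^ 2 + a₃ ^ 2 + a₄ ^ 2 + a₅ ^ 2) + 1 := h
      _ ≡ 2 * (1 + 1 + 1 + 1 + 1) + 1 [MOD 8] := by
        gcongr <;> exact Nat.sq_modEq_one_of_odd ‹_›
  have hle : x ≤ 11 := by
    have := h₁.pos
    nlinarith [Nat.pow_le_pow_left h₂₁ 2, Nat.pow_le_pow_left h₃₂ 2, Nat.pow_le_pow_left h₄₃ 2,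
      Nat.pow_le_pow_left h₅₄ 2]
  unfold Nat.ModEq at hmod
  omega

theorem eq_one_of_eleven_mul_sq_eq (ha₅ : 0 < a₅)
    (h₂₁ : a₂ ≤ a₁) (h₃₂ : a₃ ≤ a₂) (h₄₃ : a₄ ≤ a₃) (h₅₄ : a₅ ≤ a₄)
    (h : 11 * a₁ ^ 2 = 2 * (a₁ ^ 2 + a₂ ^ 2 + a₃ ^ 2 + a₄ ^ 2 + a₅ ^ 2) + 1) :
    a₁ = 1 ∧ a₂ = 1 ∧ a₃ = 1 ∧ a₄ = 1 ∧ a₅ = 1 := by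
  have ha₁ : a₁ = 1 := by
    nlinarith [Nat.pow_le_pow_left h₂₁ 2, Nat.pow_le_pow_left h₃₂ 2, Nat.pow_le_pow_left h₄₃ 2,
      Nat.pow_le_pow_left h₅₄ 2]
  omega

theorem eq_of_three_mul_sq_eq (h₁ : Odd a₁) (ha₅ : 0 < a₅)
    (h₂₁ : a₂ ≤ a₁) (h₃₂ : a₃ ≤ a₂) (h₄₃ : a₄ ≤ a₃) (h₅₄ : a₅ ≤ a₄)
    (h : 3 * a₁ ^ 2 = 2 * (a₁ ^ 2 + a₂ ^ 2 + a₃ ^ 2 + a₄ ^ 2 + a₅ ^ 2) + 1)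
    (hdvd : a₂ ^ 2 ∣ 3 * a₁ ^ 2) :
    a₁ = 3 ∧ a₂ = 1 ∧ a₃ = 1 ∧ a₄ = 1 ∧ a₅ = 1 := by
  obtain ⟨k, rfl⟩ := Nat.dvd_of_sq_dvd_mul_sq Nat.prime_three.prime.squarefree hdvd
  have hk : 3 ≤ k := by
    have hk_ne_one : k ≠ 1 := by
      rintro rfl
      rw [mul_one] at h
      omega
    obtain ⟨j, rfl⟩ := Nat.Odd.of_mul_right h₁
    omega
  have ha₂ : a₂ = 1 := by
    nlinarith [Nat.pow_le_pow_left h₃₂ 2, Nat.pow_le_pow_left h₄₃ 2,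
      Nat.pow_le_pow_left h₅₄ 2, Nat.mul_le_mul_left a₂ hk]
  subst ha₂
  have ha₃ : a₃ = 1 := by omega
  have ha₄ : a₄ = 1 := by omega
  have ha₅ : a₅ = 1 := by omega
  subst ha₃ ha₄ ha₅
  refine ⟨?_, rfl, rfl, rfl, rfl⟩
  nlinarith

theorem eq_of_mul_sq_eq_two_mul_sum_sq_add_one
    (h₁ : Odd a₁) (h₂ : Odd a₂) (h₃ : Odd a₃) (h₄ : Odd a₄) (h₅ : Odd a₅)
    (h₂₁ : a₂ ≤ a₁) (h₃₂ : a₃ ≤ a₂) (h₄₃ : a₄ ≤ a₃) (h₅₄ : a₅ ≤ a₄)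
    (h : x * a₁ ^ 2 = 2 * (a₁ ^ 2 + a₂ ^ 2 + a₃ ^ 2 + a₄ ^ 2 + a₅ ^ 2) + 1)
    (hdvd : a₂ ^ 2 ∣ x * a₁ ^ 2) :
    (x = 11 ∧ a₁ = 1 ∧ a₂ = 1 ∧ a₃ = 1 ∧ a₄ = 1 ∧ a₅ = 1) ∨
      (x = 3 ∧ a₁ = 3 ∧ a₂ = 1 ∧ a₃ = 1 ∧ a₄ = 1 ∧ a₅ = 1) := by
  rcases eq_three_or_eq_eleven_of_mul_sq_eq h₁ h₂ h₃ h₄ h₅ h₂₁ h₃₂ h₄₃ h₅₄ h with rfl | rfl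
  · exact .inr ⟨rfl, eq_of_three_mul_sq_eq h₁ h₅.pos h₂₁ h₃₂ h₄₃ h₅₄ h hdvd⟩
  · exact .inl ⟨rfl, eq_one_of_eleven_mul_sq_eq h₅.pos h₂₁ h₃₂ h₄₃ h₅₄ h⟩

end ReducedEquation

/-- MNSD rank `11` (`k = 5`): the weakly increasing `6`-tuples of positive integers
with `2/x₁ + 2/x₂ + 2/x₃ + 2/x₄ + 2/x₅ + 1/x₆ = 1` and every `x₆ / xᵢ` a perfect
square of a positive integer are exactly `(11,11,11,11,11,11)` and `(3,27,27,27,27,27)`. -/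
theorem mnsd_rank11_solutions (x1 x2 x3 x4 x5 x6 : ℕ) :
    (0 < x1 ∧ x1 ≤ x2 ∧ x2 ≤ x3 ∧ x3 ≤ x4 ∧ x4 ≤ x5 ∧ x5 ≤ x6 ∧
      (2 : ℚ) / x1 + 2 / x2 + 2 / x3 + 2 / x4 + 2 / x5 + 1 / x6 = 1 ∧
      (∃ a : ℕ, 0 < a ∧ x6 = x1 * a ^ 2) ∧
      (∃ a : ℕ, 0 < a ∧ x6 = x2 * a ^ 2) ∧
      (∃ a : ℕ, 0 < a ∧ x6 = x3 * a ^ 2) ∧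
      (∃ a : ℕ, 0 < a ∧ x6 = x4 * a ^ 2) ∧
      (∃ a : ℕ, 0 < a ∧ x6 = x5 * a ^ 2) ∧
      (∃ a : ℕ, 0 < a ∧ x6 = x6 * a ^ 2)) ↔
    ((x1, x2, x3, x4, x5, x6) = (11, 11, 11, 11, 11, 11) ∨
     (x1, x2, x3, x4, x5, x6) = (3, 27, 27, 27, 27, 27)) := by
  constructor
  · rintro ⟨hx₁, h₁₂, h₂₃, h₃₄, h₄₅, h₅₆, heq, ⟨a₁, -, e₁⟩, ⟨a₂, -, e₂⟩, ⟨a₃, -, e₃⟩,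
      ⟨a₄, -, e₄⟩, ⟨a₅, -, e₅⟩, -⟩
    have hx₆ : x6 = 2 * (a₁ ^ 2 + a₂ ^ 2 + a₃ ^ 2 + a₄ ^ 2 + a₅ ^ 2) + 1 := by
      have := (sum_two_div_add_one_div_eq_one_iff Finset.univ (x := ![x1, x2, x3, x4, x5])
        (a := ![a₁, a₂, a₃, a₄, a₅]) (N := x6) (by omega)
        (fun i _ => by fin_cases i <;> assumption)).mp
        (by simpa [Fin.sum_univ_five] using heq)
      simpa [Fin.sum_univ_five] using this
    have hodd {x a : ℕ} (e : x6 = x * a ^ 2) : Odd a := by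
      have : Odd (x * a ^ 2) := e ▸ hx₆ ▸ odd_two_mul_add_one _
      exact (Nat.odd_pow_iff two_ne_zero).mp (Nat.Odd.of_mul_right this)
    have h₂₁ := Nat.le_of_mul_sq_eq_mul_sq (by omega) h₁₂ (e₁.symm.trans e₂)
    have h₃₂ := Nat.le_of_mul_sq_eq_mul_sq (by omega) h₂₃ (e₂.symm.trans e₃)
    have h₄₃ := Nat.le_of_mul_sq_eq_mul_sq (by omega) h₃₄ (e₃.symm.trans e₄)
    have h₅₄ := Nat.le_of_mul_sq_eq_mul_sq (by omega) h₄₅ (e₄.symm.trans e₅)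
    rcases eq_of_mul_sq_eq_two_mul_sum_sq_add_one (hodd e₁) (hodd e₂) (hodd e₃) (hodd e₄)
      (hodd e₅) h₂₁ h₃₂ h₄₃ h₅₄ (e₁ ▸ hx₆) (Dvd.intro_left x2 (e₂.symm.trans e₁)) with
      ⟨rfl, rfl, rfl, rfl, rfl, rfl⟩ | ⟨rfl, rfl, rfl, rfl, rfl, rfl⟩ <;>
    norm_num at e₁ e₂ e₃ e₄ e₅ ⊢ <;>
    omega
  · rintro (h | h) <;> obtain ⟨rfl, rfl, rfl, rfl, rfl, rfl⟩ := Prod.mk.injEq .. ▸ h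
    · refine ⟨?_, ?_, ?_, ?_, ?_, ?_, ?_, ⟨1, ?_⟩, ⟨1, ?_⟩, ⟨1, ?_⟩, ⟨1, ?_⟩, ⟨1, ?_⟩, ⟨1, ?_⟩⟩ <;>
        norm_num
    · refine ⟨?_, ?_, ?_, ?_, ?_, ?_, ?_, ⟨3, ?_⟩, ⟨1, ?_⟩, ⟨1, ?_⟩, ⟨1, ?_⟩, ⟨1, ?_⟩, ⟨1, ?_⟩⟩ <;>
        norm_num
end
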